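/- arXiv:0710.1985 — 4 statements merged into one kernel-verified Lean document; each statement's English description precedes it below -/
import Mathlib

section
/- Let b > 2 be a real number and let (s_n)_{n≥0} be a sequence of real numbers with 0 < s_0 < b−2 and s_{n+1} = s_n/(b−1−s_n) for all n ≥ 0. Then for every n ≥ 0 one has 0 < s_n < b−2 and s_n/(b−2−s_n) = (b−1)^{−n}·s_0/(b−2−s_0); consequently (b−1)^n·s_n converges, as n → ∞, to s_0(b−2)/(b−2−s_0) > 0. -/
/-!
The Möbius map `x ↦ x / (b - 1 - x)` preserves `(0, b - 2)` and is conjugated to the linear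
contraction `r ↦ r / (b - 1)` by the change of variable `r = x / (b - 2 - x)`. Hence
`r n = (b - 1)⁻ⁿ r 0 → 0`, so `s n → 0`, and `(b - 1)ⁿ s n = r 0 (b - 2 - s n) → r 0 (b - 2)`.
-/

open Filter Set Topology

namespace CascadeVariance

variable {b x : ℝ}

theorem div_sub_mem_Ioo (hx : x ∈ Ioo 0 (b - 2)) : x / (b - 1 - x) ∈ Ioo 0 (b - 2) := by
  obtain ⟨hx0, hxb⟩ := hx
  have hd : 0 < b - 1 - x := by linarith
  refine ⟨div_pos hx0 hd, ?_⟩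
  rw [div_lt_iff₀ hd]
  nlinarith

theorem ratio_div_sub_eq_inv_mul (hx : x ∈ Ioo 0 (b - 2)) :
    x / (b - 1 - x) / (b - 2 - x / (b - 1 - x)) = (b - 1)⁻¹ * (x / (b - 2 - x)) := by
  obtain ⟨hx0, hxb⟩ := hx
  have h1 : b - 1 - x ≠ 0 := by linarith
  have h2 : b - 2 - x ≠ 0 := by linarith
  have h3 : b - 1 ≠ 0 := by linarith
  have h4 : b - 2 - x / (b - 1 - x) = (b - 1) * (b - 2 - x) / (b - 1 - x) := by
    field_simp
    ring
  rw [h4]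
  field_simp

theorem eq_mul_ratio_div (hb : b ≠ 2) (hx : x ≠ b - 2) :
    x = (b - 2) * (x / (b - 2 - x)) / (1 + x / (b - 2 - x)) := by
  have h1 : b - 2 - x ≠ 0 := sub_ne_zero.mpr hx.symm
  have h2 : b - 2 ≠ 0 := sub_ne_zero.mpr hb
  have h3 : 1 + x / (b - 2 - x) = (b - 2) / (b - 2 - x) := by
    field_simp
    ring
  rw [h3]
  field_simp

variable {s : ℕ → ℝ} (h0 : s 0 ∈ Ioo 0 (b - 2)) (hrec : ∀ n, s (n + 1) = s n / (b - 1 - s n))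
include h0 hrec

theorem mem_Ioo_of_rec (n : ℕ) : s n ∈ Ioo 0 (b - 2) := by
  induction n with
  | zero => exact h0
  | succ k ih => rw [hrec k]; exact div_sub_mem_Ioo ih

theorem ratio_eq_of_rec (n : ℕ) :
    s n / (b - 2 - s n) = (b - 1)⁻¹ ^ n * (s 0 / (b - 2 - s 0)) := by
  induction n with
  | zero => simp
  | succ k ih =>
    rw [hrec k, ratio_div_sub_eq_inv_mul (mem_Ioo_of_rec h0 hrec k), ih, pow_succ']
    ring

theorem tendsto_zero_of_rec : Tendsto s atTop (𝓝 0) := by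
  have hb : 1 < b - 1 := by linarith [h0.1, h0.2]
  have hr : Tendsto (fun n ↦ s n / (b - 2 - s n)) atTop (𝓝 0) := by
    have hq : Tendsto (fun n : ℕ ↦ (b - 1)⁻¹ ^ n) atTop (𝓝 0) :=
      tendsto_pow_atTop_nhds_zero_of_lt_one (by bound) (inv_lt_one_of_one_lt₀ hb)
    rw [← zero_mul (s 0 / (b - 2 - s 0))]
    exact (hq.mul_const _).congr fun n ↦ (ratio_eq_of_rec h0 hrec n).symm
  have hlim := (hr.const_mul (b - 2)).div (hr.const_add 1) (by norm_num)
  simp only [mul_zero, add_zero, zero_div] at hlim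
  refine hlim.congr fun n ↦ (eq_mul_ratio_div (by linarith) ?_).symm
  exact (mem_Ioo_of_rec h0 hrec n).2.ne

theorem pow_mul_eq_of_rec (n : ℕ) :
    (b - 1) ^ n * s n = s 0 / (b - 2 - s 0) * (b - 2 - s n) := by
  obtain ⟨hsn0, hsnb⟩ := mem_Ioo_of_rec h0 hrec n
  have hb : b - 1 ≠ 0 := by linarith
  have hd : b - 2 - s n ≠ 0 := by linarith
  rw [← mul_inv_cancel_left₀ (pow_ne_zero n hb) (s 0 / (b - 2 - s 0)), ← inv_pow,
    ← ratio_eq_of_rec h0 hrec n]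
  field_simp

end CascadeVariance

open CascadeVariance

theorem stmt_1_general (b : ℝ) (s : ℕ → ℝ)
    (h0 : 0 < s 0) (h0' : s 0 < b - 2)
    (hrec : ∀ n : ℕ, s (n + 1) = s n / (b - 1 - s n)) :
    (∀ n : ℕ, 0 < s n ∧ s n < b - 2) ∧
    (∀ n : ℕ, s n / (b - 2 - s n) = (b - 1) ^ (-(n : ℤ)) * (s 0 / (b - 2 - s 0))) ∧
    Tendsto (fun n : ℕ => (b - 1) ^ n * s n) atTop
      (nhds (s 0 * (b - 2) / (b - 2 - s 0))) ∧
    0 < s 0 * (b - 2) / (b - 2 - s 0) := by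
  have hs0 : s 0 ∈ Ioo 0 (b - 2) := ⟨h0, h0'⟩
  refine ⟨mem_Ioo_of_rec hs0 hrec, fun n ↦ ?_, ?_, by bound⟩
  · rw [zpow_neg, zpow_natCast, ← inv_pow]
    exact ratio_eq_of_rec hs0 hrec n
  · have hlim :=
      ((tendsto_zero_of_rec hs0 hrec).const_sub (b - 2)).const_mul (s 0 / (b - 2 - s 0))
    rw [sub_zero, div_mul_eq_mul_div] at hlim
    exact hlim.congr fun n ↦ (pow_mul_eq_of_rec hs0 hrec n).symm

/-- Recursion for the variances of the iterates of a Mandelbrot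
cascade operator: if `0 < s 0 < b - 2` and `s (n+1) = s n / (b - 1 - s n)`, then
`0 < s n < b - 2`, `s n / (b - 2 - s n) = (b-1)⁻ⁿ · s 0 / (b - 2 - s 0)`, and
`(b-1)^n · s n` converges to `s 0 (b-2)/(b - 2 - s 0) > 0`. -/
theorem stmt_1 (b : ℝ) (hb : 2 < b) (s : ℕ → ℝ)
    (h0 : 0 < s 0) (h0' : s 0 < b - 2)
    (hrec : ∀ n : ℕ, s (n + 1) = s n / (b - 1 - s n)) :
    (∀ n : ℕ, 0 < s n ∧ s n < b - 2) ∧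
    (∀ n : ℕ, s n / (b - 2 - s n) = (b - 1) ^ (-(n : ℤ)) * (s 0 / (b - 2 - s 0))) ∧
    Tendsto (fun n : ℕ => (b - 1) ^ n * s n) atTop
      (nhds (s 0 * (b - 2) / (b - 2 - s 0))) ∧
    0 < s 0 * (b - 2) / (b - 2 - s 0) :=
  stmt_1_general b s h0 h0' hrec
end

section
/- Let b ≥ 2 be an integer. For every continuous function f : [0,1] → ℝ and every δ ∈ (0,1), the modulus of continuity of f satisfies ω(f,δ) ≤ 2(b−1) · ∑_{j ≥ log(1/δ)/log b} sup_{w ∈ A^j} |Δ(f, I_w)|, where the sum is over all integers j ≥ −log δ / log b. -/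
open scoped ENNReal

/-- Left endpoint of the `b`-adic interval `I_w` indexed by the word `w ∈ A^j`
(the `k`-th digit of `w`, `0`-indexed, has weight `b^{-(k+1)}`). -/
noncomputable def badicLeft (b j : ℕ) (w : Fin j → Fin b) : ℝ :=
  ∑ k : Fin j, (w k : ℝ) * (b : ℝ) ^ (-((k : ℕ) + 1) : ℤ)

/-- Increment `Δ(f, I_w) = f(β) - f(α)` of `f` over the `b`-adic interval
`I_w = [α, β]`, `β = α + b^{-j}`. -/
noncomputable def badicIncr (b j : ℕ) (f : ℝ → ℝ) (w : Fin j → Fin b) : ℝ :=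
  f (badicLeft b j w + (b : ℝ) ^ (-(j : ℤ))) - f (badicLeft b j w)

/-- Modulus of continuity of `f` on `[0,1]`:
`ω(f,δ) = sup { |f t - f s| : t, s ∈ [0,1], |t - s| ≤ δ }`. -/
noncomputable def modCont (f : ℝ → ℝ) (δ : ℝ) : ℝ :=
  ⨆ p : {q : ℝ × ℝ // q.1 ∈ Set.Icc (0 : ℝ) 1 ∧ q.2 ∈ Set.Icc (0 : ℝ) 1 ∧ |q.1 - q.2| ≤ δ},
    |f (p : ℝ × ℝ).1 - f (p : ℝ × ℝ).2|

/-!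
Write `S_j = sup_{w ∈ A^j} |Δ(f, I_w)|` and let `x_n = ⌊x bⁿ⌋ / bⁿ` be the `b`-adic truncation of
`x`. Consecutive points `m / b^j, (m+1) / b^j` of the level-`j` grid are the endpoints of some
`I_w`, so along that grid `f` moves by at most `S_j` per step. Passing from `x_n` to `x_{n+1}`
takes at most `b - 1` steps of level `n + 1`, hence by continuity
`|f x - f x_n| ≤ (b - 1) ∑_{j > n} S_j`. At the level `n = ⌈log_b (1/δ)⌉` we have `δ bⁿ ≤ b`, so
for `|t - s| ≤ δ` the truncations `t_n, s_n` are at most `b ≤ 2(b - 1)` steps apart, and the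
triangle inequality through `t_n, s_n` gives the bound.
-/

open Set Filter Topology

lemma badicLeft_mul_pow {b j : ℕ} (hb : 0 < b) (w : Fin j → Fin b) :
    badicLeft b j w * (b : ℝ) ^ j = ∑ k : Fin j, (w k : ℝ) * (b : ℝ) ^ (Fin.rev k : ℕ) := by
  rw [badicLeft, Finset.sum_mul]
  refine Finset.sum_congr rfl fun k _ => ?_
  have hk : (k : ℕ) + 1 ≤ j := k.2
  rw [mul_assoc, ← zpow_natCast, ← zpow_natCast, ← zpow_add₀ (by positivity), Fin.val_rev]
  push_cast [hk]
  ring_nf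

lemma exists_badicLeft_eq {b j m : ℕ} (hb : 0 < b) (hm : m < b ^ j) :
    ∃ w : Fin j → Fin b, badicLeft b j w = m / (b : ℝ) ^ j := by
  -- `finFunctionFinEquiv` writes `m` in base `b` with the least significant digit first
  set v := finFunctionFinEquiv.symm ⟨m, hm⟩
  refine ⟨v ∘ Fin.rev, ?_⟩
  rw [eq_div_iff (by positivity), badicLeft_mul_pow hb]
  have hv : ((finFunctionFinEquiv v : ℕ) : ℝ) = m := by simp [v]
  rw [← hv, finFunctionFinEquiv_apply]
  push_cast
  exact Equiv.sum_comp Fin.revPerm fun i => (v i : ℝ) * (b : ℝ) ^ (i : ℕ)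

noncomputable def badicOsc (b j : ℕ) (f : ℝ → ℝ) : ℝ :=
  ⨆ w : Fin j → Fin b, |badicIncr b j f w|

lemma abs_badicIncr_le_badicOsc {b j : ℕ} (f : ℝ → ℝ) (w : Fin j → Fin b) :
    |badicIncr b j f w| ≤ badicOsc b j f :=
  le_ciSup (f := fun w => |badicIncr b j f w|) (Set.finite_range _).bddAbove w

lemma edist_grid_succ_le {b j m : ℕ} (hb : 0 < b) (f : ℝ → ℝ) (hm : m < b ^ j) :
    edist (f (m / (b : ℝ) ^ j)) (f ((m + 1 : ℕ) / (b : ℝ) ^ j))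
      ≤ ENNReal.ofReal (badicOsc b j f) := by
  obtain ⟨w, hw⟩ := exists_badicLeft_eq hb hm
  have hright : badicLeft b j w + (b : ℝ) ^ (-(j : ℤ)) = (m + 1 : ℕ) / (b : ℝ) ^ j := by
    rw [hw, zpow_neg, zpow_natCast]
    push_cast
    ring
  rw [edist_comm, edist_dist, Real.dist_eq, ← hw, ← hright]
  exact ENNReal.ofReal_le_ofReal (abs_badicIncr_le_badicOsc f w)

lemma edist_grid_le {b j k l : ℕ} (hb : 0 < b) (f : ℝ → ℝ) (hkl : k ≤ l) (hl : l ≤ b ^ j) :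
    edist (f (k / (b : ℝ) ^ j)) (f (l / (b : ℝ) ^ j))
      ≤ (l - k : ℕ) * ENNReal.ofReal (badicOsc b j f) := by
  have := edist_le_Ico_sum_of_edist_le (f := fun m : ℕ => f (m / (b : ℝ) ^ j)) hkl
    (d := fun _ => ENNReal.ofReal (badicOsc b j f))
    fun _ hlt => edist_grid_succ_le hb f (by omega)
  simpa [Finset.sum_const, nsmul_eq_mul] using this

noncomputable def badicTrunc (b n : ℕ) (x : ℝ) : ℝ :=
  ⌊x * (b : ℝ) ^ n⌋₊ / (b : ℝ) ^ n

lemma floor_mul_pow_le_pow {b n : ℕ} {x : ℝ} (hx : x ≤ 1) : ⌊x * (b : ℝ) ^ n⌋₊ ≤ b ^ n :=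
  Nat.floor_le_of_le (by push_cast; nlinarith [pow_nonneg (Nat.cast_nonneg b : (0 : ℝ) ≤ b) n])

lemma badicTrunc_le {b n : ℕ} (hb : 0 < b) {x : ℝ} (hx : 0 ≤ x) : badicTrunc b n x ≤ x := by
  rw [badicTrunc, div_le_iff₀ (by positivity)]
  exact Nat.floor_le (by positivity)

lemma sub_lt_badicTrunc {b n : ℕ} (hb : 0 < b) (x : ℝ) :
    x - ((b : ℝ)⁻¹) ^ n < badicTrunc b n x := by
  have hB : (0 : ℝ) < (b : ℝ) ^ n := by positivity
  rw [badicTrunc, lt_div_iff₀ hB, sub_mul, inv_pow, inv_mul_cancel₀ hB.ne']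
  linarith [Nat.lt_floor_add_one (x * (b : ℝ) ^ n)]

lemma badicTrunc_mem_Icc {b n : ℕ} (hb : 0 < b) {x : ℝ} (hx : x ∈ Icc (0 : ℝ) 1) :
    badicTrunc b n x ∈ Icc (0 : ℝ) 1 :=
  ⟨by unfold badicTrunc; positivity, (badicTrunc_le hb hx.1).trans hx.2⟩

lemma tendsto_badicTrunc {b : ℕ} (hb : 1 < b) {x : ℝ} (hx : 0 ≤ x) :
    Tendsto (fun n => badicTrunc b n x) atTop (𝓝 x) := by
  have hpow : Tendsto (fun n : ℕ => x - ((b : ℝ)⁻¹) ^ n) atTop (𝓝 x) := by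
    simpa using (tendsto_pow_atTop_nhds_zero_of_lt_one (by positivity)
      (inv_lt_one_of_one_lt₀ (by exact_mod_cast hb))).const_sub x
  exact tendsto_of_tendsto_of_tendsto_of_le_of_le hpow tendsto_const_nhds
    (fun n => (sub_lt_badicTrunc (by omega) x).le) fun n => badicTrunc_le (by omega) hx

lemma edist_badicTrunc_succ_le {b : ℕ} (hb : 0 < b) (f : ℝ → ℝ) {x : ℝ}
    (hx : x ∈ Icc (0 : ℝ) 1) (n : ℕ) :
    edist (f (badicTrunc b n x)) (f (badicTrunc b (n + 1) x))
      ≤ ((b : ℝ≥0∞) - 1) * ENNReal.ofReal (badicOsc b (n + 1) f) := by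
  set M := ⌊x * (b : ℝ) ^ (n + 1)⌋₊
  have hb' : (b : ℝ) ≠ 0 := by positivity
  -- the two truncations differ by the last digit `M % b` in units of `b^{-(n+1)}`
  have hdiv : ⌊x * (b : ℝ) ^ n⌋₊ = M / b := by
    rw [← Nat.floor_div_natCast, pow_succ, ← mul_assoc, mul_div_cancel_right₀ _ hb']
  have hlow : badicTrunc b n x = (b * (M / b) : ℕ) / (b : ℝ) ^ (n + 1) := by
    rw [badicTrunc, hdiv, pow_succ]
    push_cast
    field_simp
  have hdigit : ((M % b : ℕ) : ℝ≥0∞) ≤ b - 1 :=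
    ENNReal.le_sub_of_add_le_right ENNReal.one_ne_top (by exact_mod_cast Nat.mod_lt M hb)
  calc edist (f (badicTrunc b n x)) (f (badicTrunc b (n + 1) x))
      ≤ (M - b * (M / b) : ℕ) * ENNReal.ofReal (badicOsc b (n + 1) f) := by
        rw [hlow]
        exact edist_grid_le hb f (Nat.mul_div_le M b) (floor_mul_pow_le_pow hx.2)
    _ ≤ ((b : ℝ≥0∞) - 1) * ENNReal.ofReal (badicOsc b (n + 1) f) := by
        rw [← Nat.mod_eq_sub_mul_div]
        gcongr

lemma edist_badicTrunc_le_tsum {b : ℕ} (hb : 1 < b) {f : ℝ → ℝ}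
    (hf : ContinuousOn f (Icc (0 : ℝ) 1)) {x : ℝ} (hx : x ∈ Icc (0 : ℝ) 1) (n : ℕ) :
    edist (f (badicTrunc b n x)) (f x)
      ≤ ((b : ℝ≥0∞) - 1) * ∑' m, ENNReal.ofReal (badicOsc b (n + m + 1) f) := by
  have hlim : Tendsto (fun n => f (badicTrunc b n x)) atTop (𝓝 (f x)) :=
    (hf x hx).tendsto.comp <| tendsto_nhdsWithin_iff.2
      ⟨tendsto_badicTrunc hb hx.1, .of_forall fun _ => badicTrunc_mem_Icc (by omega) hx⟩
  rw [← ENNReal.tsum_mul_left]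
  exact edist_le_tsum_of_edist_le_of_tendsto _
    (fun k => edist_badicTrunc_succ_le (by omega) f hx k) hlim n

lemma edist_badicTrunc_le_of_abs_sub_le {b n : ℕ} (hb : 0 < b) (f : ℝ → ℝ) {s t : ℝ}
    (hs : s ∈ Icc (0 : ℝ) 1) (ht : t ∈ Icc (0 : ℝ) 1) (hst : |t - s| * (b : ℝ) ^ n ≤ b) :
    edist (f (badicTrunc b n s)) (f (badicTrunc b n t))
      ≤ b * ENNReal.ofReal (badicOsc b n f) := by
  wlog hle : s ≤ t generalizing s t
  · rw [edist_comm]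
    exact this ht hs (by rwa [abs_sub_comm]) (by linarith)
  have hB : (0 : ℝ) ≤ (b : ℝ) ^ n := by positivity
  have hmono : ⌊s * (b : ℝ) ^ n⌋₊ ≤ ⌊t * (b : ℝ) ^ n⌋₊ := Nat.floor_le_floor (by nlinarith)
  have hgap : ⌊t * (b : ℝ) ^ n⌋₊ ≤ ⌊s * (b : ℝ) ^ n⌋₊ + b := by
    rw [← Nat.floor_add_natCast (by nlinarith [hs.1])]
    refine Nat.floor_le_floor ?_
    rw [abs_of_nonneg (by linarith)] at hst
    nlinarith
  calc edist (f (badicTrunc b n s)) (f (badicTrunc b n t))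
      ≤ (⌊t * (b : ℝ) ^ n⌋₊ - ⌊s * (b : ℝ) ^ n⌋₊ : ℕ) * ENNReal.ofReal (badicOsc b n f) :=
        edist_grid_le hb f hmono (floor_mul_pow_le_pow ht.2)
    _ ≤ b * ENNReal.ofReal (badicOsc b n f) := by
        gcongr
        omega

lemma mul_pow_ceil_logb_le {b δ : ℝ} (hb : 1 < b) (hδ : 0 < δ) (hδ1 : δ ≤ 1) :
    δ * b ^ ⌈Real.logb b (1 / δ)⌉₊ ≤ b := by
  have hL : 0 ≤ Real.logb b (1 / δ) :=
    Real.logb_nonneg hb (by rw [le_div_iff₀ hδ]; linarith)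
  have hpow : b ^ ⌈Real.logb b (1 / δ)⌉₊ ≤ b / δ :=
    calc b ^ ⌈Real.logb b (1 / δ)⌉₊ = b ^ (⌈Real.logb b (1 / δ)⌉₊ : ℝ) :=
          (Real.rpow_natCast _ _).symm
      _ ≤ b ^ (Real.logb b (1 / δ) + 1) :=
          Real.rpow_le_rpow_of_exponent_le hb.le (Nat.ceil_lt_add_one hL).le
      _ = b / δ := by
          rw [Real.rpow_add (by linarith), Real.rpow_logb (by linarith) hb.ne' (by positivity),
            Real.rpow_one]
          ring
  rwa [le_div_iff₀ hδ, mul_comm] at hpow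

lemma add_tsum_le_tsum_subtype (T : ℕ → ℝ≥0∞) {L : ℝ} {n : ℕ} (hn : L ≤ n) :
    T n + ∑' m, T (n + m + 1) ≤ ∑' j : {j : ℕ // L ≤ j}, T j := by
  have hshift : T n + ∑' m, T (n + m + 1) = ∑' m, T (n + m) :=
    (tsum_eq_zero_add' (f := fun m => T (n + m)) ENNReal.summable).symm
  rw [hshift]
  refine ENNReal.tsum_comp_le_tsum_of_injective
    (f := fun m => (⟨n + m, hn.trans (by simp)⟩ : {j : ℕ // L ≤ j})) ?_ fun j => T j
  intro m m' h
  simpa using congrArg Subtype.val h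

lemma ofReal_iSup_le {ι : Sort*} {g : ι → ℝ} {c : ℝ≥0∞} (h : ∀ i, ENNReal.ofReal (g i) ≤ c) :
    ENNReal.ofReal (⨆ i, g i) ≤ c := by
  rcases eq_or_ne c ⊤ with rfl | hc
  · exact le_top
  · exact ENNReal.ofReal_le_of_le_toReal <| Real.iSup_le
      (fun i => (ENNReal.ofReal_le_iff_le_toReal hc).1 (h i)) ENNReal.toReal_nonneg

/-- For every continuous `f : [0,1] → ℝ` and `δ ∈ (0,1)`,
`ω(f,δ) ≤ 2(b-1) ∑_{j ≥ log(1/δ)/log b} sup_{w ∈ A^j} |Δ(f, I_w)|`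
(the right-hand side is computed in `ℝ≥0∞`, so that it may be infinite). -/
theorem stmt_9 (b : ℕ) (hb : 2 ≤ b) (f : ℝ → ℝ)
    (hf : ContinuousOn f (Set.Icc (0 : ℝ) 1)) (δ : ℝ) (hδ : 0 < δ) (hδ' : δ < 1) :
    ENNReal.ofReal (modCont f δ) ≤
      2 * ((b : ℝ≥0∞) - 1) *
        ∑' j : {j : ℕ // Real.log (1 / δ) / Real.log b ≤ (j : ℝ)},
          ENNReal.ofReal (⨆ w : Fin (j : ℕ) → Fin b, |badicIncr b (j : ℕ) f w|) := by
  rw [Real.log_div_log]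
  set T : ℕ → ℝ≥0∞ := fun j => ENNReal.ofReal (badicOsc b j f)
  set n := ⌈Real.logb b (1 / δ)⌉₊
  set R := ∑' m, T (n + m + 1)
  have hscale : δ * (b : ℝ) ^ n ≤ b := mul_pow_ceil_logb_le (by exact_mod_cast hb) hδ hδ'.le
  have hb2 : (b : ℝ≥0∞) ≤ 2 * ((b : ℝ≥0∞) - 1) := by
    rw [← Nat.cast_one (R := ℝ≥0∞), ← ENNReal.natCast_sub]
    exact_mod_cast (by omega : b ≤ 2 * (b - 1))
  refine ofReal_iSup_le fun ⟨⟨t, s⟩, ht, hs, hts⟩ => ?_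
  rw [← Real.dist_eq, ← edist_dist]
  calc edist (f t) (f s)
      ≤ edist (f t) (f (badicTrunc b n t)) + edist (f (badicTrunc b n t)) (f (badicTrunc b n s))
          + edist (f (badicTrunc b n s)) (f s) := edist_triangle4 _ _ _ _
    _ ≤ ((b : ℝ≥0∞) - 1) * R + b * T n + ((b : ℝ≥0∞) - 1) * R := by
        gcongr
        · rw [edist_comm]
          exact edist_badicTrunc_le_tsum (by omega) hf ht n
        · refine edist_badicTrunc_le_of_abs_sub_le (by omega) f ht hs ?_
          rw [abs_sub_comm]
          exact (mul_le_mul_of_nonneg_right hts (by positivity)).trans hscale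
        · exact edist_badicTrunc_le_tsum (by omega) hf hs n
    _ ≤ ((b : ℝ≥0∞) - 1) * R + 2 * ((b : ℝ≥0∞) - 1) * T n + ((b : ℝ≥0∞) - 1) * R := by
        gcongr
    _ = 2 * ((b : ℝ≥0∞) - 1) * (T n + R) := by ring
    _ ≤ 2 * ((b : ℝ≥0∞) - 1) * ∑' j : {j : ℕ // Real.logb b (1 / δ) ≤ (j : ℝ)}, T j := by
        gcongr
        exact add_tsum_le_tsum_subtype T (Nat.le_ceil _)
end

section
/- (Finite additivity of the additive-cascade random measure.) Let b ≥ 2 be an integer and let (ξ(w)), indexed by the nonempty words over A = {0,…,b−1}, be i.i.d. standard normal random variables. For each nonempty word w, set ζ(w) = √(b−1)·lim_{n→∞} ∑_{j=1}^n b^{−j} ∑_{v∈A^j} ξ(wv) (the limit exists almost surely and in L²), S(w) = ∑_{k=1}^{|w|} ξ(w|_k), and M([w]) = b^{−|w|}·( ζ(w) + √(b−1)·S(w) ). Then almost surely, for every nonempty word w, M([w]) = ∑_{ℓ∈A} M([wℓ]); i.e., M defines a finitely additive random measure on the cylinders of A^ω. -/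
open MeasureTheory Filter
open scoped ProbabilityTheory

/-- The type of nonempty words over the alphabet `{0,…,b-1}` (the component `n : ℕ`
carries words of length `n+1`). -/
def Word (b : ℕ) : Type := Σ n : ℕ, Fin (n + 1) → Fin b

/-- The length `|w|` of a word. -/
def wordLen {b : ℕ} (w : Word b) : ℕ := w.1 + 1

/-- The prefix `w|_{k+1}` of length `k+1` of a nonempty word `w`. -/
def wordPrefix {b : ℕ} (w : Word b) (k : Fin (w.1 + 1)) : Word b :=
  ⟨(k : ℕ), fun i => w.2 ⟨(i : ℕ), by omega⟩⟩

/-- The word `wℓ` obtained by appending the letter `ℓ` to the word `w`. -/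
def wordSnoc {b : ℕ} (w : Word b) (ℓ : Fin b) : Word b :=
  ⟨w.1 + 1, Fin.snoc w.2 ℓ⟩

/-- Concatenation `wv` of two nonempty words. -/
def wordAppend {b : ℕ} (w v : Word b) : Word b :=
  ⟨w.1 + 1 + v.1, fun i => Fin.append w.2 v.2 (Fin.cast (by omega) i)⟩

/-- The branching random walk `S(w) = ∑_{k=1}^{|w|} ξ(w|_k)`. -/
noncomputable def brwS {b : ℕ} {Ω : Type*} (ξ : Word b → Ω → ℝ) (w : Word b) (ω : Ω) : ℝ :=
  ∑ k : Fin (w.1 + 1), ξ (wordPrefix w k) ω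

/-- The additive-cascade measure of the cylinder `[w]`:
`M([w]) = b^{-|w|} (ζ(w) + √(b-1) S(w))`. -/
noncomputable def cascadeM {b : ℕ} {Ω : Type*} (ξ ζ : Word b → Ω → ℝ)
    (w : Word b) (ω : Ω) : ℝ :=
  (b : ℝ) ^ (-(wordLen w : ℤ)) * (ζ w ω + Real.sqrt ((b : ℝ) - 1) * brwS ξ w ω)

/-!
Splitting off the first letter of `v` shows that the partial sums defining `ζ` satisfy
`ζₙ₊₁(w) = b⁻¹ (√(b-1) ∑_ℓ ξ(wℓ) + ∑_ℓ ζₙ(wℓ))` exactly; passing to the limit gives the same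
recursion for `ζ`, almost surely for all words at once since there are countably many. Together
with `S(wℓ) = S(w) + ξ(wℓ)` this is precisely `M([w]) = ∑_ℓ M([wℓ])`.
-/

instance (b : ℕ) : Countable (Word b) := by
  unfold Word; infer_instance

section Words

variable {b : ℕ}

lemma wordLen_wordSnoc (w : Word b) (ℓ : Fin b) : wordLen (wordSnoc w ℓ) = wordLen w + 1 := rfl

lemma wordAppend_single (w : Word b) (v : Fin 1 → Fin b) :
    wordAppend w ⟨0, v⟩ = wordSnoc w (v 0) := by
  unfold wordAppend wordSnoc
  refine Sigma.ext rfl (heq_of_eq (funext fun i => ?_))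
  rw [Fin.append_right_eq_snoc]
  exact congrArg _ (Fin.ext rfl)

lemma wordAppend_wordSnoc (w : Word b) (ℓ : Fin b) (j : ℕ) (v : Fin (j + 1) → Fin b) :
    wordAppend (wordSnoc w ℓ) ⟨j, v⟩ = wordAppend w ⟨j + 1, Fin.cons ℓ v⟩ := by
  refine Sigma.ext (by simp only [wordAppend, wordSnoc]; omega)
    ((Fin.heq_fun_iff (by simp only [wordAppend, wordSnoc]; omega)).2 fun i => ?_)
  simp only [wordAppend, wordSnoc]
  rw [Fin.append_left_snoc]
  exact congrArg _ (Fin.ext rfl)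

lemma sum_wordAppend_single {M : Type*} [AddCommMonoid M] (u : Word b) (f : Word b → M) :
    ∑ v : Fin (0 + 1) → Fin b, f (wordAppend u ⟨0, v⟩) = ∑ ℓ : Fin b, f (wordSnoc u ℓ) := by
  simp_rw [wordAppend_single]
  exact (Equiv.funUnique (Fin 1) (Fin b)).sum_comp (fun ℓ => f (wordSnoc u ℓ))

lemma sum_wordAppend_succ {M : Type*} [AddCommMonoid M] (u : Word b) (j : ℕ)
    (f : Word b → M) :
    ∑ v : Fin (j + 1 + 1) → Fin b, f (wordAppend u ⟨j + 1, v⟩)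
      = ∑ ℓ : Fin b, ∑ v : Fin (j + 1) → Fin b, f (wordAppend (wordSnoc u ℓ) ⟨j, v⟩) := by
  simp_rw [wordAppend_wordSnoc, ← Fintype.sum_prod_type']
  exact ((Fin.consEquiv fun _ : Fin (j + 1 + 1) => Fin b).sum_comp
    fun v => f (wordAppend u ⟨j + 1, v⟩)).symm

lemma wordPrefix_wordSnoc_castSucc (w : Word b) (ℓ : Fin b) (k : Fin (w.1 + 1)) :
    wordPrefix (wordSnoc w ℓ) k.castSucc = wordPrefix w k := by
  unfold wordPrefix wordSnoc
  refine Sigma.ext rfl ((Fin.heq_fun_iff rfl).2 fun i => ?_)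
  have hi : (i : ℕ) < w.1 + 1 := Nat.lt_of_lt_of_le i.isLt k.isLt
  simp [Fin.snoc, hi]

lemma wordPrefix_wordSnoc_last (w : Word b) (ℓ : Fin b) :
    wordPrefix (wordSnoc w ℓ) (Fin.last (w.1 + 1)) = wordSnoc w ℓ :=
  Sigma.ext rfl (heq_of_eq (funext fun _ => congrArg _ (Fin.ext rfl)))

lemma brwS_wordSnoc {Ω : Type*} (ξ : Word b → Ω → ℝ) (w : Word b) (ℓ : Fin b) (ω : Ω) :
    brwS ξ (wordSnoc w ℓ) ω = brwS ξ w ω + ξ (wordSnoc w ℓ) ω := by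
  change ∑ k : Fin (w.1 + 1 + 1), ξ (wordPrefix (wordSnoc w ℓ) k) ω = _
  simp only [Fin.sum_univ_castSucc, wordPrefix_wordSnoc_castSucc, wordPrefix_wordSnoc_last, brwS]

end Words

section DescendantSeries

variable {b : ℕ}

/-- `∑_{j<n} b^{-(j+1)} ∑_{v ∈ A^{j+1}} x(uv)`, whose limit (times `√(b-1)`) is `ζ(u)`. -/
noncomputable def descendantSeries (x : Word b → ℝ) (u : Word b) (n : ℕ) : ℝ :=
  ∑ j ∈ Finset.range n, (b : ℝ) ^ (-((j : ℤ) + 1)) *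
    ∑ v : Fin (j + 1) → Fin b, x (wordAppend u ⟨j, v⟩)

lemma descendantSeries_succ (hb : b ≠ 0) (x : Word b → ℝ) (u : Word b) (n : ℕ) :
    descendantSeries x u (n + 1)
      = (b : ℝ)⁻¹ * (∑ ℓ : Fin b, x (wordSnoc u ℓ)
          + ∑ ℓ : Fin b, descendantSeries x (wordSnoc u ℓ) n) := by
  have hb' : (b : ℝ) ≠ 0 := Nat.cast_ne_zero.2 hb
  have shift : ∀ j : ℕ, (b : ℝ) ^ (-(((j + 1 : ℕ) : ℤ) + 1))
      = (b : ℝ)⁻¹ * (b : ℝ) ^ (-((j : ℤ) + 1)) := fun j => by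
    rw [← zpow_neg_one, ← zpow_add₀ hb']; push_cast; ring_nf
  simp only [descendantSeries, Finset.sum_range_succ', sum_wordAppend_succ,
    sum_wordAppend_single, shift]
  rw [Finset.sum_comm, Nat.cast_zero, zero_add, zpow_neg_one, mul_add, add_comm, Finset.mul_sum]
  simp only [Finset.mul_sum, mul_assoc]

lemma limit_eq_of_tendsto_descendantSeries (hb : b ≠ 0) (c : ℝ) (x z : Word b → ℝ)
    (hz : ∀ u, Tendsto (fun n => c * descendantSeries x u n) atTop (nhds (z u))) (u : Word b) :
    z u = (b : ℝ)⁻¹ * (c * ∑ ℓ : Fin b, x (wordSnoc u ℓ) + ∑ ℓ : Fin b, z (wordSnoc u ℓ)) := by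
  have hrec : ∀ n, c * descendantSeries x u (n + 1) = (b : ℝ)⁻¹ *
      (c * ∑ ℓ : Fin b, x (wordSnoc u ℓ) + ∑ ℓ : Fin b, c * descendantSeries x (wordSnoc u ℓ) n) :=
    fun n => by rw [descendantSeries_succ hb, ← Finset.mul_sum]; ring
  refine tendsto_nhds_unique ((hz u).comp (tendsto_add_atTop_nat 1)) ?_
  simp_rw [Function.comp_def, hrec]
  exact (tendsto_const_nhds.add (tendsto_finsetSum _ fun ℓ _ => hz (wordSnoc u ℓ))).const_mul _

end DescendantSeries

lemma cascadeM_eq_sum_wordSnoc {b : ℕ} (hb : b ≠ 0) {Ω : Type*} (ξ ζ : Word b → Ω → ℝ)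
    (w : Word b) (ω : Ω)
    (hζ : ζ w ω = (b : ℝ)⁻¹ * (Real.sqrt ((b : ℝ) - 1) * ∑ ℓ : Fin b, ξ (wordSnoc w ℓ) ω
      + ∑ ℓ : Fin b, ζ (wordSnoc w ℓ) ω)) :
    cascadeM ξ ζ w ω = ∑ ℓ : Fin b, cascadeM ξ ζ (wordSnoc w ℓ) ω := by
  have hb' : (b : ℝ) ≠ 0 := Nat.cast_ne_zero.2 hb
  have hpow : (b : ℝ) ^ (-((wordLen w + 1 : ℕ) : ℤ))
      = (b : ℝ) ^ (-(wordLen w : ℤ)) * (b : ℝ)⁻¹ := by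
    rw [← zpow_neg_one, ← zpow_add₀ hb']; push_cast; ring_nf
  simp only [cascadeM, wordLen_wordSnoc, hpow, brwS_wordSnoc, ← Finset.mul_sum, mul_add,
    Finset.sum_add_distrib, Finset.sum_const, Finset.card_univ, Fintype.card_fin, nsmul_eq_mul]
  rw [hζ]
  field_simp
  ring

theorem stmt_13_general {Ω : Type*} [MeasureSpace Ω]
    (b : ℕ) (hb : 2 ≤ b)
    (ξ : Word b → Ω → ℝ)
    (ζ : Word b → Ω → ℝ)
    (hζ : ∀ w, ∀ᵐ ω ∂ℙ, Tendsto
      (fun n => Real.sqrt ((b : ℝ) - 1) * ∑ j ∈ Finset.range n,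
        (b : ℝ) ^ (-((j : ℤ) + 1)) *
          ∑ v : Fin (j + 1) → Fin b, ξ (wordAppend w ⟨j, v⟩) ω)
      atTop (nhds (ζ w ω))) :
    ∀ᵐ ω ∂ℙ, ∀ w : Word b,
      cascadeM ξ ζ w ω = ∑ ℓ : Fin b, cascadeM ξ ζ (wordSnoc w ℓ) ω := by
  have hb0 : b ≠ 0 := by omega
  filter_upwards [ae_all_iff.2 hζ] with ω hω w
  exact cascadeM_eq_sum_wordSnoc hb0 ξ ζ w ω <|
    limit_eq_of_tendsto_descendantSeries hb0 _ (fun u => ξ u ω) (fun u => ζ u ω) hω w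

/-- finite additivity of the additive-cascade random measure.
With `(ξ w)` i.i.d. standard normal and `ζ(w)` the a.s. limit of
`√(b-1) ∑_{j=1}^n b^{-j} ∑_{v ∈ A^j} ξ(wv)`, almost surely, for every nonempty word
`w`, `M([w]) = ∑_{ℓ ∈ A} M([wℓ])`. -/
theorem stmt_13 {Ω : Type*} [MeasureSpace Ω] [IsProbabilityMeasure (ℙ : Measure Ω)]
    (b : ℕ) (hb : 2 ≤ b)
    (ξ : Word b → Ω → ℝ)
    (hmeas : ∀ w, Measurable (ξ w))
    (hindep : ProbabilityTheory.iIndepFun ξ ℙ)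
    (hlaw : ∀ w, Measure.map (ξ w) ℙ = ProbabilityTheory.gaussianReal 0 1)
    (ζ : Word b → Ω → ℝ)
    (hζ : ∀ w, ∀ᵐ ω ∂ℙ, Tendsto
      (fun n => Real.sqrt ((b : ℝ) - 1) * ∑ j ∈ Finset.range n,
        (b : ℝ) ^ (-((j : ℤ) + 1)) *
          ∑ v : Fin (j + 1) → Fin b, ξ (wordAppend w ⟨j, v⟩) ω)
      atTop (nhds (ζ w ω))) :
    ∀ᵐ ω ∂ℙ, ∀ w : Word b,
      cascadeM ξ ζ w ω = ∑ ℓ : Fin b, cascadeM ξ ζ (wordSnoc w ℓ) ω :=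
  stmt_13_general b hb ξ ζ hζ
end

section
/- Let b ≥ 2 be an integer, (ξ(w)) i.i.d. standard normals indexed by nonempty words over A = {0,…,b−1}, and define M([w]) = b^{−|w|}·( ζ(w) + √(b−1)·S(w) ) as in the context. Then, with probability 1, for every ε > 0 one has sup_{v∈A^n} |M([v])| = o( b^{−n(1−ε)} ) as n → ∞. -/
/-!
Each `ξ(u)` is standard Gaussian, and the `k`-th partial sum defining `ζ(w)` is a combination
of independent standard Gaussians whose squared coefficients sum to `1 - b^{-k} ≤ 1`. So it is
sub-Gaussian with variance proxy `1`, and the tail bound `P(|·| > a) ≤ 2 e^{-a²/2}` passes to the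
almost sure limit `ζ(w)`. As there are `b^n` words of length `n` and `∑ b^n e^{-n²/2} < ∞`,
Borel–Cantelli gives, almost surely, a constant `C` with `|ξ(u)|, |ζ(u)| ≤ C |u|` for all words.
Then `|S(v)| ≤ C |v|²`, hence `|M([v])| = O(n² b^{-n})` uniformly in `|v| = n`, which is
`o(b^{-n(1-ε)})` for every `ε > 0`.
-/

open MeasureTheory Filter Asymptotics
open scoped ProbabilityTheory

open Real ProbabilityTheory
open scoped NNReal ENNReal Topology

namespace ProbabilityTheory

section SubGaussian

variable {Ω : Type*} {mΩ : MeasurableSpace Ω} {μ : Measure Ω} {X : Ω → ℝ}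

lemma HasSubgaussianMGF.mono {c d : ℝ≥0} (h : HasSubgaussianMGF X c μ) (hcd : c ≤ d) :
    HasSubgaussianMGF X d μ where
  integrable_exp_mul := h.integrable_exp_mul
  mgf_le t := (h.mgf_le t).trans <| exp_le_exp.2 <| by gcongr

lemma HasSubgaussianMGF.measure_abs_ge_le [IsFiniteMeasure μ] {c : ℝ≥0}
    (h : HasSubgaussianMGF X c μ) {ε : ℝ} (hε : 0 ≤ ε) :
    μ.real {ω | ε ≤ |X ω|} ≤ 2 * exp (-ε ^ 2 / (2 * c)) := by
  have hsub : {ω | ε ≤ |X ω|} ⊆ {ω | ε ≤ X ω} ∪ {ω | ε ≤ (-X) ω} := fun ω (hω : ε ≤ |X ω|) =>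
    le_abs.1 hω
  calc μ.real {ω | ε ≤ |X ω|} ≤ μ.real ({ω | ε ≤ X ω} ∪ {ω | ε ≤ (-X) ω}) := measureReal_mono hsub
    _ ≤ μ.real {ω | ε ≤ X ω} + μ.real {ω | ε ≤ (-X) ω} := measureReal_union_le _ _
    _ ≤ 2 * exp (-ε ^ 2 / (2 * c)) := by
      linarith [h.measure_ge_le hε, h.neg.measure_ge_le hε]

lemma hasSubgaussianMGF_of_map_eq_gaussianReal {v : ℝ≥0} (hX : μ.map X = gaussianReal 0 v) :
    HasSubgaussianMGF X v μ := by
  have hXm : AEMeasurable X μ := aemeasurable_of_map_neZero (by rw [hX]; infer_instance)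
  rw [← HasSubgaussianMGF.id_map_iff hXm, hX]
  exact ⟨integrable_exp_mul_gaussianReal, fun t => by simp [mgf_id_gaussianReal]⟩

end SubGaussian

end ProbabilityTheory

section Tails

variable {Ω : Type*} {mΩ : MeasurableSpace Ω} {μ : Measure Ω}

lemma measure_lt_abs_le_of_ae_tendsto {X : ℕ → Ω → ℝ} {Z : Ω → ℝ}
    (hX : ∀ᵐ ω ∂μ, Tendsto (fun k => X k ω) atTop (𝓝 (Z ω))) {a : ℝ} {p : ℝ≥0∞}
    (hp : ∀ k, μ {ω | a ≤ |X k ω|} ≤ p) :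
    μ {ω | a < |Z ω|} ≤ p := by
  set s : ℕ → Set Ω := fun K => {ω | ∀ k ≥ K, a ≤ |X k ω|}
  have hs : Monotone s := fun K L hKL ω hω k hk => hω k (hKL.trans hk)
  have hZ : {ω | a < |Z ω|} ≤ᵐ[μ] ⋃ K, s K := by
    filter_upwards [hX] with ω hω haZ
    exact Set.mem_iUnion.2 (eventually_atTop.1 (hω.abs.eventually (eventually_ge_nhds haZ)))
  calc μ {ω | a < |Z ω|} ≤ μ (⋃ K, s K) := measure_mono_ae hZ
    _ = ⨆ K, μ (s K) := hs.measure_iUnion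
    _ ≤ p := iSup_le fun K =>
      (measure_mono fun ω (hω : ∀ k ≥ K, a ≤ |X k ω|) => hω K le_rfl).trans (hp K)

lemma measureReal_lt_abs_le_of_ae_tendsto [IsFiniteMeasure μ] {X : ℕ → Ω → ℝ} {Z : Ω → ℝ}
    (hX : ∀ᵐ ω ∂μ, Tendsto (fun k => X k ω) atTop (𝓝 (Z ω))) {a p : ℝ} (hp0 : 0 ≤ p)
    (hp : ∀ k, μ.real {ω | a ≤ |X k ω|} ≤ p) :
    μ.real {ω | a < |Z ω|} ≤ p :=
  ENNReal.toReal_le_of_le_ofReal hp0 <| measure_lt_abs_le_of_ae_tendsto hX fun k =>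
    (ENNReal.le_ofReal_iff_toReal_le (measure_ne_top _ _) hp0).2 (hp k)

end Tails

section Words

variable {b : ℕ}

def wordsUpToLen (b N : ℕ) : Finset (Word b) :=
  (Finset.range N).sigma fun _ => Finset.univ

lemma mem_wordsUpToLen {N : ℕ} {u : Word b} : u ∈ wordsUpToLen b N ↔ wordLen u ≤ N :=
  Finset.mem_sigma.trans <| (and_iff_left (Finset.mem_univ _)).trans Finset.mem_range

lemma sum_wordsUpToLen {M : Type*} [AddCommMonoid M] (N : ℕ) (F : Word b → M) :
    ∑ u ∈ wordsUpToLen b N, F u = ∑ j ∈ Finset.range N, ∑ v : Fin (j + 1) → Fin b, F ⟨j, v⟩ :=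
  Finset.sum_sigma _ _ _

lemma wordLen_mk (n : ℕ) (f : Fin (n + 1) → Fin b) : wordLen (⟨n, f⟩ : Word b) = n + 1 := rfl

lemma wordAppend_injective (w : Word b) : Function.Injective (wordAppend w) := by
  rintro ⟨m, f⟩ ⟨k, g⟩ h
  obtain rfl : m = k := by simpa [wordAppend] using congrArg Sigma.fst h
  have hsnd := eq_of_heq (Sigma.mk.inj_iff.1 h).2
  congr 1
  funext i
  have := congrFun hsnd ⟨w.1 + 1 + i, by dsimp only [wordAppend]; omega⟩
  simpa [Fin.append, Fin.addCases, Fin.cast, show ¬w.1 + 1 + (i : ℕ) ≤ w.1 by omega] using this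

end Words

lemma sum_range_sub_one_mul_inv_pow_succ_le_one {β : ℝ} (hβ : 0 < β) (k : ℕ) :
    ∑ j ∈ Finset.range k, (β - 1) * (β ^ (j + 1))⁻¹ ≤ 1 := by
  have htel : ∀ j : ℕ, (β - 1) * (β ^ (j + 1))⁻¹ = (β ^ j)⁻¹ - (β ^ (j + 1))⁻¹ := fun j => by
    field_simp
    ring
  simp only [htel, Finset.sum_range_sub', pow_zero, inv_one, sub_le_self_iff]
  positivity

section Cascade

variable {Ω : Type*} {b : ℕ}

noncomputable def cascadePartialSum (ξ : Word b → Ω → ℝ) (w : Word b) (k : ℕ) (ω : Ω) : ℝ :=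
  √((b : ℝ) - 1) * ∑ j ∈ Finset.range k,
    (b : ℝ) ^ (-((j : ℤ) + 1)) * ∑ v : Fin (j + 1) → Fin b, ξ (wordAppend w ⟨j, v⟩) ω

noncomputable def cascadeCoeff (b : ℕ) (u : Word b) : ℝ :=
  √((b : ℝ) - 1) * (b : ℝ) ^ (-((u.1 : ℤ) + 1))

lemma cascadePartialSum_eq_sum (ξ : Word b → Ω → ℝ) (w : Word b) (k : ℕ) (ω : Ω) :
    cascadePartialSum ξ w k ω
      = ∑ u ∈ wordsUpToLen b k, cascadeCoeff b u * ξ (wordAppend w u) ω := by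
  simp only [cascadePartialSum, sum_wordsUpToLen, cascadeCoeff, Finset.mul_sum, mul_assoc]

lemma sum_sq_cascadeCoeff_le_one (hb : 1 ≤ b) (k : ℕ) :
    ∑ u ∈ wordsUpToLen b k, cascadeCoeff b u ^ 2 ≤ 1 := by
  have hb0 : (0 : ℝ) < b := by exact_mod_cast hb
  have hlevel : ∀ j : ℕ, ∑ _v : Fin (j + 1) → Fin b, cascadeCoeff b ⟨j, _v⟩ ^ 2
      = ((b : ℝ) - 1) * ((b : ℝ) ^ (j + 1))⁻¹ := fun j => by
    have hsqrt : √((b : ℝ) - 1) ^ 2 = b - 1 :=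
      sq_sqrt (sub_nonneg.2 (by exact_mod_cast hb))
    simp only [cascadeCoeff, Finset.sum_const, Finset.card_univ, Fintype.card_fun, Fintype.card_fin,
      nsmul_eq_mul, mul_pow, hsqrt]
    rw [show -((j : ℤ) + 1) = -((j + 1 : ℕ) : ℤ) by push_cast; ring, zpow_neg, zpow_natCast]
    push_cast
    field_simp
  rw [sum_wordsUpToLen]
  simp only [hlevel]
  exact sum_range_sub_one_mul_inv_pow_succ_le_one hb0 k

variable [MeasureSpace Ω] {ξ : Word b → Ω → ℝ}

lemma hasSubgaussianMGF_cascadePartialSum (hb : 1 ≤ b) (hindep : iIndepFun ξ ℙ)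
    (hlaw : ∀ w, Measure.map (ξ w) ℙ = gaussianReal 0 1) (w : Word b) (k : ℕ) :
    HasSubgaussianMGF (cascadePartialSum ξ w k) 1 ℙ := by
  have hterm : ∀ u, HasSubgaussianMGF (fun ω => cascadeCoeff b u * ξ (wordAppend w u) ω)
      (‖cascadeCoeff b u‖₊ ^ 2) ℙ := fun u => by
    convert (hasSubgaussianMGF_of_map_eq_gaussianReal (hlaw _)).const_mul (cascadeCoeff b u) using 1
    ext
    -- `const_mul` writes the proxy as an element of the bare subtype, which `simp` cannot rewrite
    change _ = cascadeCoeff b u ^ 2 * 1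
    simp
  have hsum := HasSubgaussianMGF.sum_of_iIndepFun
    ((hindep.precomp (wordAppend_injective w)).comp (fun u x => cascadeCoeff b u * x)
      fun u => measurable_const_mul _)
    (s := wordsUpToLen b k) fun u _ => hterm u
  refine (hsum.congr (ae_of_all _ fun ω => (cascadePartialSum_eq_sum ξ w k ω).symm)).mono ?_
  rw [← NNReal.coe_le_coe]
  push_cast
  simpa using sum_sq_cascadeCoeff_le_one hb k

variable [IsProbabilityMeasure (ℙ : Measure Ω)]

lemma measureReal_lt_abs_le_of_map_eq_gaussianReal {X : Ω → ℝ}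
    (hX : Measure.map X ℙ = gaussianReal 0 1) {a : ℝ} (ha : 0 ≤ a) :
    (ℙ : Measure Ω).real {ω | a < |X ω|} ≤ 2 * exp (-a ^ 2 / 2) :=
  (measureReal_mono (Set.ofPred_subset_ofPred.2 fun _ => le_of_lt)).trans <| by
    simpa using (hasSubgaussianMGF_of_map_eq_gaussianReal hX).measure_abs_ge_le ha

lemma measureReal_lt_abs_cascadeLimit_le (hb : 1 ≤ b) (hindep : iIndepFun ξ ℙ)
    (hlaw : ∀ w, Measure.map (ξ w) ℙ = gaussianReal 0 1) {w : Word b} {Z : Ω → ℝ}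
    (hZ : ∀ᵐ ω ∂ℙ, Tendsto (fun k => cascadePartialSum ξ w k ω) atTop (𝓝 (Z ω)))
    {a : ℝ} (ha : 0 ≤ a) :
    (ℙ : Measure Ω).real {ω | a < |Z ω|} ≤ 2 * exp (-a ^ 2 / 2) :=
  measureReal_lt_abs_le_of_ae_tendsto hZ (by positivity) fun k => by
    simpa using (hasSubgaussianMGF_cascadePartialSum hb hindep hlaw w k).measure_abs_ge_le ha

end Cascade

lemma summable_pow_mul_exp_neg_sq_div_two (c : ℝ) :
    Summable fun n : ℕ => c ^ n * exp (-(n : ℝ) ^ 2 / 2) := by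
  refine summable_of_ratio_norm_eventually_le (r := 1 / 2) (by norm_num) ?_
  have hlim : Tendsto (fun n : ℕ => |c| * exp (-(2 * (n : ℝ) + 1) / 2)) atTop (𝓝 0) := by
    have h : Tendsto (fun n : ℕ => -(2 * (n : ℝ) + 1) / 2) atTop atBot :=
      (tendsto_neg_atBot_iff.2 <| tendsto_atTop_add_const_right _ 1 <|
        tendsto_natCast_atTop_atTop.const_mul_atTop two_pos).atBot_div_const two_pos
    simpa using (tendsto_exp_atBot.comp h).const_mul |c|
  filter_upwards [hlim.eventually_le_const (by norm_num : (0 : ℝ) < 1 / 2)] with n hn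
  have hsucc : ‖c ^ (n + 1) * exp (-((n + 1 : ℕ) : ℝ) ^ 2 / 2)‖
      = |c| * exp (-(2 * (n : ℝ) + 1) / 2) * ‖c ^ n * exp (-(n : ℝ) ^ 2 / 2)‖ := by
    simp only [Real.norm_eq_abs, abs_mul, abs_pow, abs_exp]
    rw [mul_mul_mul_comm, ← exp_add, pow_succ']
    push_cast
    ring_nf
  rw [hsucc]
  exact mul_le_mul_of_nonneg_right hn (norm_nonneg _)

section Growth

variable {b : ℕ}

lemma exists_forall_abs_le_mul_wordLen {y : Word b → ℝ}
    (h : ∀ᶠ n in atTop, ∀ f : Fin (n + 1) → Fin b, |y ⟨n, f⟩| ≤ n + 1) :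
    ∃ C, 0 ≤ C ∧ ∀ u, |y u| ≤ C * wordLen u := by
  obtain ⟨N, hN⟩ := eventually_atTop.1 h
  set C := 1 + ∑ u ∈ wordsUpToLen b N, |y u|
  have hC : 1 ≤ C := le_add_of_nonneg_right (Finset.sum_nonneg fun _ _ => abs_nonneg _)
  refine ⟨C, zero_le_one.trans hC, fun ⟨n, f⟩ => ?_⟩
  have hlen : (1 : ℝ) ≤ wordLen (⟨n, f⟩ : Word b) := by simp [wordLen_mk]
  rcases lt_or_ge n N with hn | hn
  · calc |y ⟨n, f⟩| ≤ ∑ u ∈ wordsUpToLen b N, |y u| :=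
          Finset.single_le_sum (f := fun u => |y u|) (fun _ _ => abs_nonneg _)
            (mem_wordsUpToLen (u := ⟨n, f⟩).2 hn)
      _ ≤ C := le_add_of_nonneg_left zero_le_one
      _ ≤ C * wordLen (⟨n, f⟩ : Word b) := le_mul_of_one_le_right (by linarith) hlen
  · calc |y ⟨n, f⟩| ≤ wordLen (⟨n, f⟩ : Word b) := by simpa [wordLen_mk] using hN n hn f
      _ ≤ C * wordLen (⟨n, f⟩ : Word b) := le_mul_of_one_le_left (by linarith) hC

variable {Ω : Type*} [MeasurableSpace Ω] {μ : Measure Ω} [IsFiniteMeasure μ]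

/-- Borel–Cantelli: there are `b ^ (n + 1)` words of length `n + 1`, and
`b ^ (n + 1) e^{-(n + 1)² / 2}` is summable. -/
lemma ae_eventually_forall_abs_le {Y : Word b → Ω → ℝ}
    (hY : ∀ u a, 0 ≤ a → μ.real {ω | a < |Y u ω|} ≤ 2 * exp (-a ^ 2 / 2)) :
    ∀ᵐ ω ∂μ, ∀ᶠ n in atTop, ∀ f : Fin (n + 1) → Fin b, |Y ⟨n, f⟩ ω| ≤ n + 1 := by
  set E : ℕ → Set Ω := fun n => ⋃ f : Fin (n + 1) → Fin b, {ω | (n : ℝ) + 1 < |Y ⟨n, f⟩ ω|}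
  set g : ℕ → ℝ := fun n => 2 * ((b : ℝ) ^ (n + 1) * exp (-((n + 1 : ℕ) : ℝ) ^ 2 / 2))
  have hg : Summable g :=
    ((summable_nat_add_iff 1).2 (summable_pow_mul_exp_neg_sq_div_two b)).mul_left 2
  have hE : ∀ n, μ (E n) ≤ ENNReal.ofReal (g n) := fun n => by
    rw [← ofReal_measureReal]
    refine ENNReal.ofReal_le_ofReal ((measureReal_iUnion_fintype_le _).trans ?_)
    calc ∑ f : Fin (n + 1) → Fin b, μ.real {ω | (n : ℝ) + 1 < |Y ⟨n, f⟩ ω|}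
        ≤ ∑ _f : Fin (n + 1) → Fin b, 2 * exp (-((n : ℝ) + 1) ^ 2 / 2) :=
          Finset.sum_le_sum fun f _ => hY _ _ (by positivity)
      _ = g n := by simp [g]; ring
  have hsum : ∑' n, μ (E n) ≠ ⊤ := by
    refine ne_top_of_le_ne_top ?_ (ENNReal.tsum_le_tsum hE)
    rw [← ENNReal.ofReal_tsum_of_nonneg (fun n => by positivity) hg]
    exact ENNReal.ofReal_ne_top
  filter_upwards [ae_eventually_notMem hsum] with ω hω
  exact hω.mono fun n hn f => not_lt.1 fun h => hn (Set.mem_iUnion.2 ⟨f, h⟩)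

lemma ae_exists_forall_abs_le_mul_wordLen {Y : Word b → Ω → ℝ}
    (hY : ∀ u a, 0 ≤ a → μ.real {ω | a < |Y u ω|} ≤ 2 * exp (-a ^ 2 / 2)) :
    ∀ᵐ ω ∂μ, ∃ C, 0 ≤ C ∧ ∀ u, |Y u ω| ≤ C * wordLen u :=
  (ae_eventually_forall_abs_le hY).mono fun ω => exists_forall_abs_le_mul_wordLen (y := (Y · ω))

end Growth

section Bounds

variable {Ω : Type*} {b : ℕ} {ξ ζ : Word b → Ω → ℝ} {ω : Ω} {C C' : ℝ}

lemma abs_brwS_le (hC : 0 ≤ C) (hξ : ∀ u, |ξ u ω| ≤ C * wordLen u) (w : Word b) :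
    |brwS ξ w ω| ≤ C * wordLen w ^ 2 := by
  have hprefix : ∀ k, |ξ (wordPrefix w k) ω| ≤ C * wordLen w := fun k =>
    (hξ _).trans <| mul_le_mul_of_nonneg_left
      (by simpa [wordLen, wordPrefix] using k.isLt) hC
  calc |brwS ξ w ω| ≤ ∑ k : Fin (w.1 + 1), |ξ (wordPrefix w k) ω| :=
        Finset.abs_sum_le_sum_abs _ _
    _ ≤ ∑ _k : Fin (w.1 + 1), C * wordLen w := Finset.sum_le_sum fun k _ => hprefix k
    _ = C * wordLen w ^ 2 := by simp [wordLen]; ring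

lemma abs_cascadeM_le (hC : 0 ≤ C) (hC' : 0 ≤ C') (hξ : ∀ u, |ξ u ω| ≤ C * wordLen u)
    (hζ : ∀ u, |ζ u ω| ≤ C' * wordLen u) (w : Word b) :
    |cascadeM ξ ζ w ω|
      ≤ (C' + √((b : ℝ) - 1) * C) * wordLen w ^ 2 * (b : ℝ) ^ (-(wordLen w : ℤ)) := by
  have hlen : (1 : ℝ) ≤ wordLen w := by simp [wordLen]
  have hsum : |ζ w ω + √((b : ℝ) - 1) * brwS ξ w ω| ≤ (C' + √((b : ℝ) - 1) * C) * wordLen w ^ 2 :=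
    calc |ζ w ω + √((b : ℝ) - 1) * brwS ξ w ω|
        ≤ |ζ w ω| + √((b : ℝ) - 1) * |brwS ξ w ω| := by
          simpa [abs_mul, abs_of_nonneg (sqrt_nonneg _)]
            using abs_add_le (ζ w ω) (√((b : ℝ) - 1) * brwS ξ w ω)
      _ ≤ C' * wordLen w + √((b : ℝ) - 1) * (C * wordLen w ^ 2) :=
          add_le_add (hζ w) (mul_le_mul_of_nonneg_left (abs_brwS_le hC hξ w) (sqrt_nonneg _))
      _ ≤ (C' + √((b : ℝ) - 1) * C) * wordLen w ^ 2 := by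
          nlinarith [mul_le_mul_of_nonneg_left (le_self_pow₀ hlen two_ne_zero) hC']
  rw [cascadeM, abs_mul, abs_of_nonneg (by positivity), mul_comm]
  exact mul_le_mul_of_nonneg_right hsum (by positivity)

lemma iSup_abs_cascadeM_le (hC : 0 ≤ C) (hC' : 0 ≤ C') (hξ : ∀ u, |ξ u ω| ≤ C * wordLen u)
    (hζ : ∀ u, |ζ u ω| ≤ C' * wordLen u) (n : ℕ) :
    ⨆ f : Fin (n + 1) → Fin b, |cascadeM ξ ζ ⟨n, f⟩ ω|
      ≤ (C' + √((b : ℝ) - 1) * C) * (((n : ℝ) + 1) ^ 2 * (b : ℝ) ^ (-((n : ℝ) + 1))) := by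
  refine Real.iSup_le (fun f => ?_) (by positivity)
  have hpow : (b : ℝ) ^ (-(wordLen (⟨n, f⟩ : Word b) : ℤ)) = (b : ℝ) ^ (-((n : ℝ) + 1)) := by
    rw [← Real.rpow_intCast, wordLen_mk]
    push_cast
    rfl
  calc |cascadeM ξ ζ ⟨n, f⟩ ω|
      ≤ (C' + √((b : ℝ) - 1) * C) * wordLen (⟨n, f⟩ : Word b) ^ 2
        * (b : ℝ) ^ (-(wordLen (⟨n, f⟩ : Word b) : ℤ)) := abs_cascadeM_le hC hC' hξ hζ _
    _ = _ := by rw [hpow, mul_assoc, wordLen_mk]; push_cast; rfl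

end Bounds

lemma isLittleO_sq_mul_rpow_neg {β ε : ℝ} (hβ : 1 < β) (hε : 0 < ε) :
    (fun x : ℝ => x ^ 2 * β ^ (-x)) =o[atTop] fun x => β ^ (-(x * (1 - ε))) := by
  have hβ0 : 0 < β := zero_lt_one.trans hβ
  have hsplit : ∀ x, β ^ (-(x * (1 - ε))) = exp (ε * log β * x) * β ^ (-x) := fun x => by
    rw [rpow_def_of_pos hβ0, rpow_def_of_pos hβ0, ← exp_add]
    ring_nf
  simp only [hsplit]
  exact (isLittleO_pow_exp_pos_mul_atTop 2 (mul_pos hε (log_pos hβ))).mul_isBigO (isBigO_refl _ _)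

theorem stmt_17_general {Ω : Type*} [MeasureSpace Ω] [IsProbabilityMeasure (ℙ : Measure Ω)]
    (b : ℕ) (hb : 2 ≤ b)
    (ξ : Word b → Ω → ℝ)
    (hindep : ProbabilityTheory.iIndepFun ξ ℙ)
    (hlaw : ∀ w, Measure.map (ξ w) ℙ = ProbabilityTheory.gaussianReal 0 1)
    (ζ : Word b → Ω → ℝ)
    (hζ : ∀ w, ∀ᵐ ω ∂ℙ, Tendsto
      (fun n => Real.sqrt ((b : ℝ) - 1) * ∑ j ∈ Finset.range n,
        (b : ℝ) ^ (-((j : ℤ) + 1)) *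
          ∑ v : Fin (j + 1) → Fin b, ξ (wordAppend w ⟨j, v⟩) ω)
      atTop (nhds (ζ w ω))) :
    ∀ᵐ ω ∂ℙ, ∀ ε : ℝ, 0 < ε →
      (fun n : ℕ => ⨆ f : Fin (n + 1) → Fin b, |cascadeM ξ ζ ⟨n, f⟩ ω|)
        =o[atTop] (fun n : ℕ => (b : ℝ) ^ (-(((n : ℝ) + 1) * (1 - ε)))) := by
  have hb1 : 1 ≤ b := one_le_two.trans hb
  have hξ_tail u a (ha : 0 ≤ a) := measureReal_lt_abs_le_of_map_eq_gaussianReal (hlaw u) ha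
  have hζ_tail u a (ha : 0 ≤ a) := measureReal_lt_abs_cascadeLimit_le hb1 hindep hlaw (hζ u) ha
  filter_upwards [ae_exists_forall_abs_le_mul_wordLen hξ_tail,
    ae_exists_forall_abs_le_mul_wordLen hζ_tail] with ω ⟨C, hC, hξω⟩ ⟨C', hC', hζω⟩ ε hε
  have hlim := (isLittleO_sq_mul_rpow_neg (by exact_mod_cast hb : (1 : ℝ) < b) hε).comp_tendsto
    (tendsto_atTop_add_const_right _ 1 tendsto_natCast_atTop_atTop)
  refine IsBigO.trans_isLittleO (isBigO_of_le' (c := C' + √((b : ℝ) - 1) * C) _ fun n => ?_) hlim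
  rw [Real.norm_of_nonneg (Real.iSup_nonneg fun _ => abs_nonneg _),
    Real.norm_of_nonneg (by dsimp only [Function.comp_apply]; positivity)]
  exact iSup_abs_cascadeM_le hC hC' hξω hζω n

/-- With probability `1`, for every `ε > 0`,
`sup_{v ∈ A^n} |M([v])| = o(b^{-n(1-ε)})` as `n → ∞` (here the words of length `n`
are parametrized as `⟨n-1, f⟩`, i.e. `n` below denotes length `n+1`). -/
theorem stmt_17 {Ω : Type*} [MeasureSpace Ω] [IsProbabilityMeasure (ℙ : Measure Ω)]
    (b : ℕ) (hb : 2 ≤ b)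
    (ξ : Word b → Ω → ℝ)
    (hmeas : ∀ w, Measurable (ξ w))
    (hindep : ProbabilityTheory.iIndepFun ξ ℙ)
    (hlaw : ∀ w, Measure.map (ξ w) ℙ = ProbabilityTheory.gaussianReal 0 1)
    (ζ : Word b → Ω → ℝ)
    (hζ : ∀ w, ∀ᵐ ω ∂ℙ, Tendsto
      (fun n => Real.sqrt ((b : ℝ) - 1) * ∑ j ∈ Finset.range n,
        (b : ℝ) ^ (-((j : ℤ) + 1)) *
          ∑ v : Fin (j + 1) → Fin b, ξ (wordAppend w ⟨j, v⟩) ω)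
      atTop (nhds (ζ w ω))) :
    ∀ᵐ ω ∂ℙ, ∀ ε : ℝ, 0 < ε →
      (fun n : ℕ => ⨆ f : Fin (n + 1) → Fin b, |cascadeM ξ ζ ⟨n, f⟩ ω|)
        =o[atTop] (fun n : ℕ => (b : ℝ) ^ (-(((n : ℝ) + 1) * (1 - ε)))) :=
  stmt_17_general b hb ξ hindep hlaw ζ hζ
end
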